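/- arXiv:1205.0618 — 7 statements merged into one kernel-verified Lean document; each statement's English description precedes it below -/
import Mathlib

section
/- The function f(ρ) = log₂(1 + (1-ρ)hP / ((1-ρ)σ_A² + σ_cov²)) is concave in ρ on the interval [0,1], where h, P, σ_A², σ_cov² are positive real constants. -/
/-!
Writing `t = 1 - ρ`, the signal-to-noise ratio `t c / (t a + b)` equals
`c / a - (b c / a) (t a + b)⁻¹`, a constant minus a nonnegative multiple of the reciprocal of a
positive affine function, hence concave. The logarithm is concave and increasing, so it preserves
concavity of positive functions.
-/

open Set Real

lemma ConcaveOn.log {E : Type*} [AddCommMonoid E] [SMul ℝ E] {s : Set E} {f : E → ℝ}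
    (hf : ConcaveOn ℝ s f) (hpos : ∀ x ∈ s, 0 < f x) : ConcaveOn ℝ s fun x => Real.log (f x) := by
  refine ⟨hf.1, fun x hx y hy a b ha hb hab => ?_⟩
  calc a • Real.log (f x) + b • Real.log (f y)
      ≤ Real.log (a • f x + b • f y) :=
        strictConcaveOn_log_Ioi.concaveOn.2 (hpos x hx) (hpos y hy) ha hb hab
    _ ≤ Real.log (f (a • x + b • y)) :=
        Real.log_le_log (convex_Ioi (0 : ℝ) (hpos x hx) (hpos y hy) ha hb hab)
          (hf.2 hx hy ha hb hab)

lemma convexOn_inv_mul_add (a b : ℝ) :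
    ConvexOn ℝ {t | 0 < t * a + b} fun t => (t * a + b)⁻¹ := by
  have hline : ∀ t, AffineMap.lineMap b (a + b) t = t * a + b := fun t => by
    simp [AffineMap.lineMap_apply]
  have := (convexOn_zpow (-1)).comp_affineMap (AffineMap.lineMap (k := ℝ) b (a + b))
  simp only [Function.comp_def, hline, zpow_neg_one] at this
  rwa [show AffineMap.lineMap b (a + b) ⁻¹' Ioi 0 = {t | 0 < t * a + b} by ext; simp [hline]]
    at this

lemma concaveOn_mul_div_mul_add {a b c : ℝ} (ha : 0 < a) (hbc : 0 ≤ b * c) :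
    ConcaveOn ℝ {t | 0 < t * a + b} fun t => t * c / (t * a + b) := by
  refine ((convexOn_inv_mul_add a b).smul (div_nonneg hbc ha.le)).neg.add_const (c / a)
    |>.congr fun t ht => ?_
  have hden : 0 < a * t + b := by linarith [ht.out]
  simp only [Pi.add_apply, Pi.neg_apply, smul_eq_mul]
  field_simp
  ring

/-- The rate function `f(ρ) = log₂(1 + (1-ρ)hP / ((1-ρ)σ_A² + σ_cov²))` is concave
on `[0,1]` for positive constants `h, P, σ_A², σ_cov²`. -/
theorem sps_rate_concave (h P sA scov : ℝ) (hh : 0 < h) (hP : 0 < P)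
    (hsA : 0 < sA) (hscov : 0 < scov) :
    ConcaveOn ℝ (Set.Icc (0:ℝ) 1)
      (fun ρ : ℝ => Real.logb 2 (1 + (1 - ρ) * h * P / ((1 - ρ) * sA + scov))) := by
  have hreflect : ∀ ρ : ℝ, AffineMap.lineMap 1 0 ρ = 1 - ρ := fun ρ => by
    simp [AffineMap.lineMap_apply]; ring
  have hden : ∀ ρ ∈ Icc (0 : ℝ) 1, 0 < (1 - ρ) * sA + scov := fun ρ hρ => by
    nlinarith [hρ.2]
  have hsnr : ConcaveOn ℝ (Icc 0 1) fun ρ => (1 - ρ) * h * P / ((1 - ρ) * sA + scov) := by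
    refine ((concaveOn_mul_div_mul_add hsA (by positivity : 0 ≤ scov * (h * P))).comp_affineMap
      (AffineMap.lineMap 1 0)).subset (fun ρ hρ => ?_) (convex_Icc 0 1) |>.congr fun ρ _ => ?_
    · simpa [hreflect] using hden ρ hρ
    · simp [hreflect, mul_assoc]
  have hpos : ∀ ρ ∈ Icc (0 : ℝ) 1, 0 < 1 + (1 - ρ) * h * P / ((1 - ρ) * sA + scov) :=
    fun ρ hρ => by
      have hρ1 : 0 ≤ 1 - ρ := by linarith [hρ.2]
      have hdenρ := hden ρ hρ
      positivity
  have hrate := ((concaveOn_const 1 (convex_Icc 0 1)).add hsnr).log hpos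
  refine (hrate.smul (inv_nonneg.2 (log_nonneg one_le_two))).congr fun ρ _ => ?_
  simp [logb, div_eq_inv_mul]
end

section
/- For any N ≥ 1 and any vector (ρ₁,…,ρ_N) with each ρ_k ∈ [0,1], setting ρ̄ = (1/N)∑ρ_k, one has (1/N)∑_{k=1}^N log₂(1 + (1-ρ_k)hP / ((1-ρ_k)σ_A² + σ_cov²)) ≤ log₂(1 + (1-ρ̄)hP / ((1-ρ̄)σ_A² + σ_cov²)), while the harvested energies coincide: (1/N)∑ρ_k ζhP = ρ̄ ζhP. Hence static power splitting achieves the same rate-energy region as arbitrary dynamic power splitting. -/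
/-!
Writing `x = 1 - ρ`, the per-symbol rate is `log ((hP + σ_A²) x + σ_cov²) - log (σ_A² x + σ_cov²)`,
whose derivative `hP σ_cov² / (((hP + σ_A²) x + σ_cov²) (σ_A² x + σ_cov²))` decreases for `x ≥ 0`.
So the rate is concave in the splitting ratio and Jensen's inequality bounds the average rate by
the rate at the average ratio, while the harvested energy is linear in the ratio.
-/

open Real Set Finset

lemma ConcaveOn.mean_le_map_mean {ι : Type*} [Fintype ι] [Nonempty ι] {s : Set ℝ}
    {f : ℝ → ℝ} (hf : ConcaveOn ℝ s f) {x : ι → ℝ} (hx : ∀ i, x i ∈ s) :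
    (Fintype.card ι : ℝ)⁻¹ * ∑ i, f (x i) ≤ f ((Fintype.card ι : ℝ)⁻¹ * ∑ i, x i) := by
  simpa [Finset.centerMass] using
    hf.le_map_centerMass (t := univ) (w := fun _ => 1) (fun _ _ => zero_le_one)
      (by simp [Fintype.card_pos]) (fun i _ => hx i)

lemma concaveOn_log_mul_add_sub_log_mul_add {a b c : ℝ} (hb : 0 ≤ b) (hba : b ≤ a)
    (hc : 0 < c) : ConcaveOn ℝ (Ici 0) fun x => log (a * x + c) - log (b * x + c) := by
  have ha : 0 ≤ a := hb.trans hba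
  have hpos : ∀ {m x : ℝ}, 0 ≤ m → 0 ≤ x → 0 < m * x + c := fun hm hx => by positivity
  have hderiv : ∀ x ∈ Ioi (0 : ℝ), HasDerivAt (fun x => log (a * x + c) - log (b * x + c))
      ((a - b) * c / ((a * x + c) * (b * x + c))) x := by
    intro x hx
    have hA := hpos ha hx.out.le
    have hB := hpos hb hx.out.le
    refine (((hasDerivAt_id' x).const_mul a |>.add_const c |>.log hA.ne').sub
      ((hasDerivAt_id' x).const_mul b |>.add_const c |>.log hB.ne')).congr_deriv ?_
    rw [div_sub_div _ _ hA.ne' hB.ne']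
    ring
  refine AntitoneOn.concaveOn_of_deriv (convex_Ici 0) ?_ ?_ ?_
  · exact ((continuousOn_id.const_smul a).add_const c |>.log fun x hx => (hpos ha hx).ne').sub
      ((continuousOn_id.const_smul b).add_const c |>.log fun x hx => (hpos hb hx).ne')
  · rw [interior_Ici]
    exact fun x hx => (hderiv x hx).differentiableAt.differentiableWithinAt
  · rw [interior_Ici]
    intro x hx y hy hxy
    rw [(hderiv x hx).deriv, (hderiv y hy).deriv]
    have hAx := hpos ha hx.out.le
    have hBx := hpos hb hx.out.le
    exact div_le_div_of_nonneg_left (mul_nonneg (sub_nonneg.2 hba) hc.le) (by positivity)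
      (mul_le_mul (by gcongr) (by gcongr) hBx.le (hpos ha (hx.out.le.trans hxy)).le)

lemma concaveOn_logb_one_add_mul_div {b p s c : ℝ} (hb : 1 ≤ b) (hp : 0 ≤ p) (hs : 0 ≤ s)
    (hc : 0 < c) : ConcaveOn ℝ (Ici 0) fun x => logb b (1 + x * p / (x * s + c)) := by
  refine ((concaveOn_log_mul_add_sub_log_mul_add hs (le_add_of_nonneg_left hp) hc).smul
    (inv_nonneg.2 (log_nonneg hb))).congr fun x (hx : 0 ≤ x) => ?_
  have hB : 0 < s * x + c := by positivity
  have hSNR : 1 + x * p / (x * s + c) = ((p + s) * x + c) / (s * x + c) := by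
    rw [mul_comm x s]
    field_simp
    ring
  dsimp only
  rw [hSNR, logb, log_div (by positivity) hB.ne', smul_eq_mul, inv_mul_eq_div]

theorem sps_optimal_dps_general (h P sA scov ζ : ℝ) (hh : 0 < h) (hP : 0 < P)
    (hsA : 0 < sA) (hscov : 0 < scov)
    (N : ℕ) (hN : 1 ≤ N) (ρ : Fin N → ℝ) (hρ : ∀ k, ρ k ∈ Set.Icc (0:ℝ) 1) :
    (1 / (N:ℝ)) * ∑ k, Real.logb 2
        (1 + (1 - ρ k) * h * P / ((1 - ρ k) * sA + scov)) ≤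
      Real.logb 2 (1 + (1 - (1 / (N:ℝ)) * ∑ k, ρ k) * h * P /
        ((1 - (1 / (N:ℝ)) * ∑ k, ρ k) * sA + scov)) ∧
    (1 / (N:ℝ)) * ∑ k, ρ k * (ζ * h * P) = ((1 / (N:ℝ)) * ∑ k, ρ k) * (ζ * h * P) := by
  refine ⟨?_, by rw [← Finset.sum_mul, ← mul_assoc]⟩
  have : Nonempty (Fin N) := Fin.pos_iff_nonempty.1 hN
  have hmean : (N : ℝ)⁻¹ * ∑ k, (1 - ρ k) = 1 - (N : ℝ)⁻¹ * ∑ k, ρ k := by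
    have hN0 : (N : ℝ) ≠ 0 := Nat.cast_ne_zero.2 (by omega)
    simp [Finset.sum_sub_distrib, mul_sub, hN0]
  simpa only [mul_assoc, one_div, Fintype.card_fin, hmean] using
    (concaveOn_logb_one_add_mul_div one_le_two (mul_pos hh hP).le hsA.le hscov).mean_le_map_mean
      (x := fun k => 1 - ρ k) fun k => sub_nonneg.2 (hρ k).2

/-- Proposition 1 (optimality of SPS for the separated receiver): for any splitting
vector `(ρ₁,…,ρ_N)` with each `ρ_k ∈ [0,1]`, the average rate of DPS is no larger than
the rate of SPS with the averaged ratio `ρ̄ = (1/N)∑ρ_k`, while the harvested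
energies coincide. -/
theorem sps_optimal_dps (h P sA scov ζ : ℝ) (hh : 0 < h) (hP : 0 < P)
    (hsA : 0 < sA) (hscov : 0 < scov) (hζ0 : 0 < ζ) (hζ1 : ζ ≤ 1)
    (N : ℕ) (hN : 1 ≤ N) (ρ : Fin N → ℝ) (hρ : ∀ k, ρ k ∈ Set.Icc (0:ℝ) 1) :
    (1 / (N:ℝ)) * ∑ k, Real.logb 2
        (1 + (1 - ρ k) * h * P / ((1 - ρ k) * sA + scov)) ≤
      Real.logb 2 (1 + (1 - (1 / (N:ℝ)) * ∑ k, ρ k) * h * P /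
        ((1 - (1 / (N:ℝ)) * ∑ k, ρ k) * sA + scov)) ∧
    (1 / (N:ℝ)) * ∑ k, ρ k * (ζ * h * P) = ((1 / (N:ℝ)) * ∑ k, ρ k) * (ζ * h * P) :=
  sps_optimal_dps_general h P sA scov ζ hh hP hsA hscov N hN ρ hρ
end

section
/- In the limit σ_cov² → 0 the separated-receiver SPS rate-energy region converges to the upper-bound box: for every ε > 0 and every target energy Q < ζhP with ζ = 1, there exists ρ ∈ [0,1) with ρζhP ≥ Q and log₂(1 + (1-ρ)hP/((1-ρ)σ_A² + σ_cov²)) ≥ log₂(1 + hP/σ_A²) − ε for all sufficiently small σ_cov² > 0. -/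
/-!
Fix the splitting ratio at `ρ = max 0 (Q / hP) < 1`, which already harvests `Q`. For this fixed
`ρ` the rate is continuous in `σ_cov²` at `0`, where the factor `1 - ρ` cancels and the rate is
exactly `log₂(1 + hP/σ_A²)`; so it stays within `ε` of that value for small `σ_cov²`.
-/

open Filter Topology

lemma exists_mem_Ico_le_mul {Q E : ℝ} (hE : 0 < E) (hQ : Q < E) :
    ∃ ρ ∈ Set.Ico (0 : ℝ) 1, Q ≤ ρ * E :=
  ⟨max 0 (Q / E), ⟨le_max_left _ _, max_lt one_pos ((div_lt_one hE).2 hQ)⟩,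
    (div_le_iff₀ hE).1 (le_max_right _ _)⟩

/-- The SPS information rate, with `sA = σ_A²`, `scov = σ_cov²` and splitting ratio `ρ`. -/
noncomputable def spsRate (h P sA scov ρ : ℝ) : ℝ :=
  Real.logb 2 (1 + (1 - ρ) * h * P / ((1 - ρ) * sA + scov))

lemma one_sub_mul_div_one_sub_mul_add_zero {h P sA ρ : ℝ} (hρ : ρ ≠ 1) :
    (1 - ρ) * h * P / ((1 - ρ) * sA + 0) = h * P / sA := by
  rw [add_zero, mul_assoc, mul_div_mul_left _ _ (sub_ne_zero.2 hρ.symm)]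

lemma spsRate_zero {h P sA ρ : ℝ} (hρ : ρ ≠ 1) :
    spsRate h P sA 0 ρ = Real.logb 2 (1 + h * P / sA) := by
  rw [spsRate, one_sub_mul_div_one_sub_mul_add_zero hρ]

lemma continuousAt_spsRate_zero {h P sA ρ : ℝ} (hρ : ρ ≠ 1) (hsA : sA ≠ 0)
    (hrate : 1 + h * P / sA ≠ 0) : ContinuousAt (spsRate h P sA · ρ) 0 := by
  have hden : (1 - ρ) * sA + 0 ≠ 0 := by
    simpa using mul_ne_zero (sub_ne_zero.2 hρ.symm) hsA
  have hlog : 1 + (1 - ρ) * h * P / ((1 - ρ) * sA + 0) ≠ 0 := by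
    rwa [one_sub_mul_div_one_sub_mul_add_zero hρ]
  unfold spsRate
  exact ContinuousAt.logb (by fun_prop (disch := exact hden)) hlog

/-- As `σ_cov² → 0`, the separated-receiver SPS rate-energy region (with `ζ = 1`)
approaches the upper-bound box: for any `ε > 0` and any target energy `Q < hP`,
some `ρ ∈ [0,1)` harvests at least `Q` while the rate is within `ε` of
`log₂(1 + hP/σ_A²)` for all sufficiently small `σ_cov² > 0`. -/
theorem sps_approaches_upper_bound (h P sA : ℝ) (hh : 0 < h) (hP : 0 < P)
    (hsA : 0 < sA) (ε : ℝ) (hε : 0 < ε) (Q : ℝ) (hQ : Q < 1 * h * P) :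
    ∃ ρ : ℝ, ρ ∈ Set.Ico (0:ℝ) 1 ∧ ρ * (1 * h * P) ≥ Q ∧
      ∃ δ : ℝ, 0 < δ ∧ ∀ scov : ℝ, 0 < scov → scov < δ →
        Real.logb 2 (1 + (1 - ρ) * h * P / ((1 - ρ) * sA + scov)) ≥
          Real.logb 2 (1 + h * P / sA) - ε := by
  obtain ⟨ρ, hρ, hQρ⟩ := exists_mem_Ico_le_mul (by positivity) hQ
  refine ⟨ρ, hρ, hQρ, ?_⟩
  have hcont := continuousAt_spsRate_zero (h := h) (P := P) hρ.2.ne hsA.ne' (by positivity)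
  obtain ⟨δ, hδ, hnear⟩ :=
    Metric.eventually_nhds_iff.1 (hcont.eventually (lt_mem_nhds (sub_lt_self _ hε)))
  refine ⟨δ, hδ, fun scov hscov hscovδ => ?_⟩
  have hclose := hnear (by rwa [Real.dist_eq, sub_zero, abs_of_pos hscov])
  simp only [spsRate_zero hρ.2.ne] at hclose
  exact hclose.le
end

section
/- For every ρ ∈ [0,1], the TS rate-energy region is contained in the SPS rate-energy region: for any α ∈ [0,1] there exists ρ ∈ [0,1] with ρζhP ≥ αζhP and log₂(1 + (1-ρ)hP/((1-ρ)σ_A² + σ_cov²)) ≥ (1-α)log₂(1 + hP/(σ_A²+σ_cov²)). -/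
/-!
Take the same splitting parameter `ρ = α`, so the harvested energies agree. The SPS rate
`log₂(1 + (1-ρ)hP/((1-ρ)σ_A² + σ_cov²))` dominates `log₂(1 + (1-ρ)·hP/(σ_A² + σ_cov²))`,
because splitting also scales down the antenna noise, and by concavity of `log` the latter is
at least `(1-ρ)·log₂(1 + hP/(σ_A² + σ_cov²))`, the TS rate.
-/

open Real Set

theorem Real.mul_logb_one_add_le_logb_one_add_mul {b t x : ℝ} (hb : 1 < b) (ht₀ : 0 ≤ t)
    (ht₁ : t ≤ 1) (hx : -1 < x) :
    t * logb b (1 + x) ≤ logb b (1 + t * x) := by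
  have hconcave := strictConcaveOn_log_Ioi.concaveOn.2 (mem_Ioi.2 one_pos)
    (mem_Ioi.2 (by linarith : (0 : ℝ) < 1 + x)) (sub_nonneg.2 ht₁) ht₀ (sub_add_cancel 1 t)
  have hcombination : (1 - t) • (1 : ℝ) + t • (1 + x) = 1 + t * x := by
    simp only [smul_eq_mul]; ring
  rw [hcombination, log_one, smul_zero, zero_add, smul_eq_mul] at hconcave
  rw [logb, logb, mul_div_assoc']
  exact div_le_div_of_nonneg_right hconcave (log_pos hb).le

theorem mul_div_add_le_mul_div_mul_add {t a b c : ℝ} (ht₀ : 0 ≤ t) (ht₁ : t ≤ 1) (ha : 0 ≤ a)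
    (hb : 0 ≤ b) (hc : 0 < c) :
    t * (a / (b + c)) ≤ t * a / (t * b + c) := by
  rw [mul_div_assoc']
  apply div_le_div_of_nonneg_left (mul_nonneg ht₀ ha) (by positivity)
  nlinarith

theorem ts_subset_sps_general (h P sA scov ζ : ℝ) (hh : 0 < h) (hP : 0 < P)
    (hsA : 0 < sA) (hscov : 0 < scov)
    (α : ℝ) (hα : α ∈ Set.Icc (0:ℝ) 1) :
    ∃ ρ ∈ Set.Icc (0:ℝ) 1, ρ * (ζ * h * P) ≥ α * (ζ * h * P) ∧
      Real.logb 2 (1 + (1 - ρ) * h * P / ((1 - ρ) * sA + scov)) ≥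
        (1 - α) * Real.logb 2 (1 + h * P / (sA + scov)) := by
  obtain ⟨hα₀, hα₁⟩ := hα
  have ht₀ : 0 ≤ 1 - α := sub_nonneg.2 hα₁
  have ht₁ : 1 - α ≤ 1 := by linarith
  refine ⟨α, ⟨hα₀, hα₁⟩, le_rfl, ?_⟩
  calc (1 - α) * logb 2 (1 + h * P / (sA + scov))
      ≤ logb 2 (1 + (1 - α) * (h * P / (sA + scov))) :=
        mul_logb_one_add_le_logb_one_add_mul one_lt_two ht₀ ht₁
          (neg_one_lt_zero.trans_le (by positivity))
    _ ≤ logb 2 (1 + (1 - α) * h * P / ((1 - α) * sA + scov)) := by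
        refine logb_le_logb_of_le one_lt_two (by positivity) (add_le_add_right ?_ 1)
        rw [mul_assoc]
        exact mul_div_add_le_mul_div_mul_add ht₀ ht₁ (by positivity) hsA.le hscov

/-- The TS rate-energy region is contained in the SPS region: for every `α ∈ [0,1]`
there exists `ρ ∈ [0,1]` harvesting at least as much energy and achieving at least
the TS rate. -/
theorem ts_subset_sps (h P sA scov ζ : ℝ) (hh : 0 < h) (hP : 0 < P)
    (hsA : 0 < sA) (hscov : 0 < scov) (hζ0 : 0 < ζ) (hζ1 : ζ ≤ 1)
    (α : ℝ) (hα : α ∈ Set.Icc (0:ℝ) 1) :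
    ∃ ρ ∈ Set.Icc (0:ℝ) 1, ρ * (ζ * h * P) ≥ α * (ζ * h * P) ∧
      Real.logb 2 (1 + (1 - ρ) * h * P / ((1 - ρ) * sA + scov)) ≥
        (1 - α) * Real.logb 2 (1 + h * P / (sA + scov)) :=
  ts_subset_sps_general h P sA scov ζ hh hP hsA hscov α hα
end

section
/- Let a = σ_cov² − σ_A²·P_S/(ζhP), b = σ_A²(1 − Q/(ζhP)) > 0, c = −P_S/ζ < 0, d = hP(1 − Q/(ζhP)) > 0 with 0 ≤ Q < ζhP and P_S > 0. Then the function R(s) = s·log₂(1 + (cs+d)/(as+b)) is concave on the interval [d/(hP−c), min{−d/c, 1}]. -/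
/-!
Writing `A = a + c`, `B = b + d`, the rate is `s (log (A s + B) - log (a s + b)) / log 2`, whose
second derivative is `(A b - a B) (b (A s + B) + B (a s + b)) / ((A s + B)² (a s + b)²)`.
Here `A b - a B = b c - a d = -σ_cov² d ≤ 0`, because `a = σ_cov² + k c` and `b = k d`
with `k = σ_A² / (h P)`; the same decomposition gives `a s + b = σ_cov² s + k (c s + d) > 0`.
-/

open Real Set

section MulLogSubLog

variable {a b A B x : ℝ}

theorem hasDerivAt_mul_log_sub_log (hX : A * x + B ≠ 0) (hY : a * x + b ≠ 0) :
    HasDerivAt (fun s => s * (log (A * s + B) - log (a * s + b)))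
      (log (A * x + B) - log (a * x + b) + x * (A / (A * x + B) - a / (a * x + b))) x := by
  have hlogX := (((hasDerivAt_id x).const_mul A).add_const B).log hX
  have hlogY := (((hasDerivAt_id x).const_mul a).add_const b).log hY
  refine ((hasDerivAt_id x).mul (hlogX.sub hlogY)).congr_deriv ?_
  simp only [id_eq, Pi.sub_apply]
  ring

theorem hasDerivAt_log_sub_log_add_mul_div_sub_div (hX : A * x + B ≠ 0) (hY : a * x + b ≠ 0) :
    HasDerivAt (fun s => log (A * s + B) - log (a * s + b) + s * (A / (A * s + B) - a / (a * s + b)))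
      ((A * b - a * B) * (b * (A * x + B) + B * (a * x + b)) / ((A * x + B) ^ 2 * (a * x + b) ^ 2))
      x := by
  have hlinX := ((hasDerivAt_id x).const_mul A).add_const B
  have hlinY := ((hasDerivAt_id x).const_mul a).add_const b
  have hinvX := (hasDerivAt_const x A).div hlinX hX
  have hinvY := (hasDerivAt_const x a).div hlinY hY
  refine (((hlinX.log hX).sub (hlinY.log hY)).add
    ((hasDerivAt_id x).mul (hinvX.sub hinvY))).congr_deriv ?_
  simp only [id_eq, Pi.sub_apply, Pi.div_apply, mul_one, one_mul, zero_mul, zero_sub]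
  rw [div_sub_div _ _ hX hY, div_sub_div _ _ (pow_ne_zero 2 hX) (pow_ne_zero 2 hY),
    eq_div_iff (by positivity)]
  field_simp
  ring

theorem concaveOn_mul_log_sub_log {S : Set ℝ} (hS : Convex ℝ S) (hb : 0 ≤ b) (hB : 0 ≤ B)
    (hAB : A * b ≤ a * B) (hpos : ∀ s ∈ S, 0 < a * s + b ∧ 0 < A * s + B) :
    ConcaveOn ℝ S (fun s => s * (log (A * s + B) - log (a * s + b))) := by
  have hpos' : ∀ s ∈ interior S, 0 < a * s + b ∧ 0 < A * s + B :=
    fun s hs => hpos s (interior_subset hs)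
  refine concaveOn_of_hasDerivWithinAt2_nonpos hS
    (f' := fun s => log (A * s + B) - log (a * s + b) + s * (A / (A * s + B) - a / (a * s + b)))
    (f'' := fun s => (A * b - a * B) * (b * (A * s + B) + B * (a * s + b))
      / ((A * s + B) ^ 2 * (a * s + b) ^ 2))
    (fun s hs => ?_) (fun s hs => ?_) (fun s hs => ?_) (fun s hs => ?_)
  · obtain ⟨hY, hX⟩ := hpos s hs
    exact (hasDerivAt_mul_log_sub_log hX.ne' hY.ne').continuousAt.continuousWithinAt
  · obtain ⟨hY, hX⟩ := hpos' s hs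
    exact (hasDerivAt_mul_log_sub_log hX.ne' hY.ne').hasDerivWithinAt
  · obtain ⟨hY, hX⟩ := hpos' s hs
    exact (hasDerivAt_log_sub_log_add_mul_div_sub_div hX.ne' hY.ne').hasDerivWithinAt
  · obtain ⟨hY, hX⟩ := hpos' s hs
    exact div_nonpos_of_nonpos_of_nonneg
      (mul_nonpos_of_nonpos_of_nonneg (by linarith) (by positivity)) (by positivity)

end MulLogSubLog

theorem concaveOn_mul_logb_one_add_div {β a b c d : ℝ} {S : Set ℝ} (hβ : 1 < β)
    (hS : Convex ℝ S) (hb : 0 ≤ b) (hbd : 0 ≤ b + d) (hbc : b * c ≤ a * d)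
    (hpos : ∀ s ∈ S, 0 < a * s + b ∧ 0 ≤ c * s + d) :
    ConcaveOn ℝ S (fun s => s * logb β (1 + (c * s + d) / (a * s + b))) := by
  have hposAB : ∀ s ∈ S, 0 < a * s + b ∧ 0 < (a + c) * s + (b + d) := fun s hs => by
    obtain ⟨hY, hcd⟩ := hpos s hs
    exact ⟨hY, by linarith⟩
  have hconc := concaveOn_mul_log_sub_log hS hb hbd (by linarith) hposAB
  refine (hconc.smul (inv_nonneg.mpr (log_pos hβ).le)).congr fun s hs => ?_
  obtain ⟨hY, hX⟩ := hposAB s hs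
  have hsum : 1 + (c * s + d) / (a * s + b) = ((a + c) * s + (b + d)) / (a * s + b) := by
    rw [eq_div_iff hY.ne', add_mul, div_mul_cancel₀ _ hY.ne']
    ring
  simp only [smul_eq_mul, hsum, logb, log_div hX.ne' hY.ne']
  ring

theorem ops_rate_concave_general (h P sA scov PS ζ Q : ℝ) (hh : 0 < h) (hP : 0 < P)
    (hsA : 0 < sA) (hscov : 0 < scov) (hPS : 0 < PS)
    (hζ0 : 0 < ζ) (hQ : Q < ζ * h * P)
    (a b c d : ℝ)
    (ha : a = scov - sA * PS / (ζ * h * P))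
    (hb : b = sA * (1 - Q / (ζ * h * P)))
    (hc : c = -(PS / ζ))
    (hd : d = h * P * (1 - Q / (ζ * h * P))) :
    ConcaveOn ℝ (Set.Icc (d / (h * P - c)) (min (-(d / c)) 1))
      (fun s : ℝ => s * Real.logb 2 (1 + (c * s + d) / (a * s + b))) := by
  set k := sA / (h * P) with hk_def
  have hk : 0 ≤ k := by positivity
  have ha' : a = scov + k * c := by rw [ha, hc, hk_def]; field_simp; ring
  have hb' : b = k * d := by rw [hb, hd, hk_def]; field_simp
  have hc0 : c < 0 := by rw [hc]; exact neg_neg_of_pos (div_pos hPS hζ0)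
  have hd0 : 0 < d := by
    rw [hd]
    exact mul_pos (mul_pos hh hP) (sub_pos.mpr ((div_lt_one (by positivity)).mpr hQ))
  have hpos : ∀ s ∈ Set.Icc (d / (h * P - c)) (min (-(d / c)) 1),
      0 < a * s + b ∧ 0 ≤ c * s + d := by
    rintro s ⟨hlo, hhi⟩
    have hs : 0 < s := (div_pos hd0 (by linarith [mul_pos hh hP])).trans_le hlo
    have hcd : 0 ≤ c * s + d := by
      have hsc : -d ≤ s * c := (le_div_iff_of_neg hc0).mp
        ((hhi.trans (min_le_left _ _)).trans_eq (neg_div c d).symm)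
      linarith
    have hsplit : a * s + b = scov * s + k * (c * s + d) := by rw [ha', hb']; ring
    exact ⟨hsplit ▸ by positivity, hcd⟩
  refine concaveOn_mul_logb_one_add_div one_lt_two (convex_Icc _ _) ?_ ?_ ?_ hpos
  · rw [hb']; positivity
  · rw [hb']; positivity
  · have hdet : a * d - b * c = scov * d := by rw [ha', hb']; ring
    linarith [mul_pos hscov hd0]

/-- Lemma 5.1: with `a = σ_cov² − σ_A²P_S/(ζhP)`, `b = σ_A²(1 − Q/(ζhP))`,
`c = −P_S/ζ`, `d = hP(1 − Q/(ζhP))` and `0 ≤ Q < ζhP`, the OPS rate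
`R(s) = s log₂(1 + (cs+d)/(as+b))` is concave on `[d/(hP−c), min{−d/c, 1}]`. -/
theorem ops_rate_concave (h P sA scov PS ζ Q : ℝ) (hh : 0 < h) (hP : 0 < P)
    (hsA : 0 < sA) (hscov : 0 < scov) (hPS : 0 < PS)
    (hζ0 : 0 < ζ) (hζ1 : ζ ≤ 1) (hQ0 : 0 ≤ Q) (hQ : Q < ζ * h * P)
    (a b c d : ℝ)
    (ha : a = scov - sA * PS / (ζ * h * P))
    (hb : b = sA * (1 - Q / (ζ * h * P)))
    (hc : c = -(PS / ζ))
    (hd : d = h * P * (1 - Q / (ζ * h * P))) :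
    ConcaveOn ℝ (Set.Icc (d / (h * P - c)) (min (-(d / c)) 1))
      (fun s : ℝ => s * Real.logb 2 (1 + (c * s + d) / (a * s + b))) :=
  ops_rate_concave_general h P sA scov PS ζ Q hh hP hsA hscov hPS hζ0 hQ a b c d ha hb hc hd
end

section
/- For OPS with circuit power, fixing a feasible target Q ∈ [0, ζhP), any (α,ρ) attaining the maximal rate must satisfy the energy constraint with equality: if αζhP + (1−α)ρζhP − (1−α)P_S > Q and (α,ρ) ∈ [0,1)×[0,1), then there exists (α',ρ') feasible with strictly larger rate (1−α')log₂(1+(1−ρ')hP/((1−ρ')σ_A²+σ_cov²)). -/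
/-- In Problem (P0), any `(α,ρ) ∈ [0,1)×[0,1)` satisfying the energy constraint
strictly cannot be rate-optimal: there is a feasible `(α',ρ')` with strictly larger
rate. -/
theorem ops_energy_constraint_tight (h P sA scov PS ζ Q : ℝ) (hh : 0 < h)
    (hP : 0 < P) (hsA : 0 < sA) (hscov : 0 < scov) (hPS : 0 < PS)
    (hζ0 : 0 < ζ) (hζ1 : ζ ≤ 1) (hQ0 : 0 ≤ Q) (hQ : Q < ζ * h * P)
    (α ρ : ℝ) (hα : α ∈ Set.Ico (0:ℝ) 1) (hρ : ρ ∈ Set.Ico (0:ℝ) 1)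
    (hslack : α * (ζ * h * P) + (1 - α) * ρ * (ζ * h * P) - (1 - α) * PS > Q) :
    ∃ α' ρ' : ℝ, α' ∈ Set.Icc (0:ℝ) 1 ∧ ρ' ∈ Set.Icc (0:ℝ) 1 ∧
      α' * (ζ * h * P) + (1 - α') * ρ' * (ζ * h * P) - (1 - α') * PS ≥ Q ∧
      (1 - α') * Real.logb 2 (1 + (1 - ρ') * h * P / ((1 - ρ') * sA + scov)) >
        (1 - α) * Real.logb 2 (1 + (1 - ρ) * h * P / ((1 - ρ) * sA + scov)) := by
  obtain ⟨hα0, hα1⟩ := hα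
  obtain ⟨hρ0, hρ1⟩ := hρ
  have hZ : 0 < ζ * h * P := by positivity
  set E := α * (ζ * h * P) + (1 - α) * ρ * (ζ * h * P) - (1 - α) * PS with hEdef
  have hEQ : 0 < E - Q := by linarith
  have h1ρ : 0 < 1 - ρ := by linarith
  have hden : 0 < (1 - ρ) * sA + scov := by positivity
  rcases lt_or_eq_of_le hα0 with hαpos | hα0'
  · -- α > 0 : decrease α
    set ε := min α ((E - Q) / (ζ * h * P + PS)) with hεdef
    have hDpos : 0 < ζ * h * P + PS := by linarith
    have hε0 : 0 < ε := lt_min hαpos (by positivity)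
    have hεα : ε ≤ α := min_le_left _ _
    have hεE : ε * (ζ * h * P + PS) ≤ E - Q := by
      have h2 := min_le_right α ((E - Q) / (ζ * h * P + PS))
      calc ε * (ζ * h * P + PS) ≤ ((E - Q) / (ζ * h * P + PS)) * (ζ * h * P + PS) :=
            mul_le_mul_of_nonneg_right h2 hDpos.le
        _ = E - Q := div_mul_cancel₀ _ hDpos.ne'
    refine ⟨α - ε, ρ, ⟨by linarith, by linarith⟩, ⟨hρ0, hρ1.le⟩, ?_, ?_⟩
    · -- energy still ≥ Q
      have h1 : ε * ρ * (ζ * h * P) ≥ 0 := by positivity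
      nlinarith [mul_pos hε0 hZ, mul_pos hε0 hPS]
    · -- rate strictly larger
      have hL : 0 < Real.logb 2 (1 + (1 - ρ) * h * P / ((1 - ρ) * sA + scov)) := by
        apply Real.logb_pos one_lt_two
        have : 0 < (1 - ρ) * h * P / ((1 - ρ) * sA + scov) := by positivity
        linarith
      nlinarith [mul_pos hε0 hL]
  · -- α = 0 : decrease ρ
    have hαz : α = 0 := hα0'.symm
    subst hαz
    have hρpos : 0 < ρ := by nlinarith
    set ε := min ρ ((E - Q) / (ζ * h * P)) with hεdef
    have hε0 : 0 < ε := lt_min hρpos (by positivity)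
    have hερ : ε ≤ ρ := min_le_left _ _
    have hεE : ε * (ζ * h * P) ≤ E - Q := by
      have h2 := min_le_right ρ ((E - Q) / (ζ * h * P))
      calc ε * (ζ * h * P) ≤ ((E - Q) / (ζ * h * P)) * (ζ * h * P) :=
            mul_le_mul_of_nonneg_right h2 hZ.le
        _ = E - Q := div_mul_cancel₀ _ hZ.ne'
    have hden' : 0 < (1 - (ρ - ε)) * sA + scov := by nlinarith
    refine ⟨0, ρ - ε, ⟨le_refl _, by norm_num⟩, ⟨by linarith, by nlinarith⟩, ?_, ?_⟩
    · simp only [hEdef] at hεE ⊢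
      nlinarith
    · have harg : 1 + (1 - ρ) * h * P / ((1 - ρ) * sA + scov)
          < 1 + (1 - (ρ - ε)) * h * P / ((1 - (ρ - ε)) * sA + scov) := by
        have : (1 - ρ) * h * P / ((1 - ρ) * sA + scov)
            < (1 - (ρ - ε)) * h * P / ((1 - (ρ - ε)) * sA + scov) := by
          rw [div_lt_div_iff₀ hden hden']
          nlinarith [mul_pos (mul_pos hε0 (mul_pos hh hP)) hscov]
        linarith
      have h1 : 0 < 1 + (1 - ρ) * h * P / ((1 - ρ) * sA + scov) := by positivity
      have := Real.logb_lt_logb one_lt_two h1 harg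
      simpa using this
end

section
/- Under the constraints 0 ≤ Q_req ≤ ζhP and P_S ≥ P_I > 0, the optimal off-time fractions satisfy α₁* ≥ α₂*, where α₁* = max over feasibility of [(Q_req − ρζhP + P_S)/((1−ρ)ζhP + P_S)]⁺ minimized over ρ ∈ [0,1) (which is bounded below by (Q_req − ζhP + P_S)/P_S), and α₂* = [(Q_req − ζhP + P_I)/P_I]⁺. Consequently if additionally M₁* ≤ M₂*, then R₁* = (1−α₁*)log₂M₁* ≤ (1−α₂*)log₂M₂* = R₂*. -/
/-- Proposition 7.1: with `0 ≤ Q_req ≤ ζhP` and `P_S ≥ P_I > 0`, for every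
`ρ ∈ [0,1)` the separated receiver's off-time fraction
`α₁ = [(Q_req − ρζhP + P_S)/((1−ρ)ζhP + P_S)]⁺` is bounded below by
`(Q_req − ζhP + P_S)/P_S` and satisfies `α₁ ≥ α₂* = [(Q_req − ζhP + P_I)/P_I]⁺`;
consequently, if `M₁* ≤ M₂*` (both at least 1) then
`R₁* = (1−α₁)log₂M₁* ≤ (1−α₂*)log₂M₂* = R₂*`. -/
theorem sep_vs_int_offtime (h P ζ PS PI Qreq : ℝ) (hh : 0 < h) (hP : 0 < P)
    (hζ0 : 0 < ζ) (hζ1 : ζ ≤ 1) (hPI : 0 < PI) (hPSPI : PI ≤ PS)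
    (hQ0 : 0 ≤ Qreq) (hQ : Qreq ≤ ζ * h * P)
    (ρ : ℝ) (hρ : ρ ∈ Set.Ico (0:ℝ) 1)
    (M₁ M₂ : ℝ) (hM₁ : 1 ≤ M₁) (hM : M₁ ≤ M₂) :
    (Qreq - ζ * h * P + PS) / PS ≤
      max ((Qreq - ρ * (ζ * h * P) + PS) / ((1 - ρ) * (ζ * h * P) + PS)) 0 ∧
    max ((Qreq - ζ * h * P + PI) / PI) 0 ≤
      max ((Qreq - ρ * (ζ * h * P) + PS) / ((1 - ρ) * (ζ * h * P) + PS)) 0 ∧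
    (1 - max ((Qreq - ρ * (ζ * h * P) + PS) / ((1 - ρ) * (ζ * h * P) + PS)) 0) *
        Real.logb 2 M₁ ≤
      (1 - max ((Qreq - ζ * h * P + PI) / PI) 0) * Real.logb 2 M₂ := by
  obtain ⟨hρ0, hρ1⟩ := hρ
  set Q := ζ * h * P with hQdef
  have hQpos : 0 < Q := by positivity
  have hPS : 0 < PS := lt_of_lt_of_le hPI hPSPI
  have hD : 0 < (1 - ρ) * Q + PS := by
    have : 0 < 1 - ρ := by linarith
    positivity
  -- step 1 : (Qreq - Q + PS)/PS ≤ f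
  have h1 : (Qreq - Q + PS) / PS ≤ (Qreq - ρ * Q + PS) / ((1 - ρ) * Q + PS) := by
    rw [div_le_div_iff₀ hPS hD]
    nlinarith [mul_nonneg (mul_nonneg (by linarith : (0:ℝ) ≤ 1 - ρ) hQpos.le)
      (by linarith : (0:ℝ) ≤ PS - Qreq + Q)]
  have h1' : (Qreq - Q + PS) / PS ≤
      max ((Qreq - ρ * Q + PS) / ((1 - ρ) * Q + PS)) 0 :=
    h1.trans (le_max_left _ _)
  -- t ↦ (Qreq - Q + t)/t nondecreasing
  have h2 : (Qreq - Q + PI) / PI ≤ (Qreq - Q + PS) / PS := by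
    rw [div_le_div_iff₀ hPI hPS]
    nlinarith [mul_nonneg (by linarith : (0:ℝ) ≤ PS - PI) (by linarith : (0:ℝ) ≤ Q - Qreq)]
  have h2' : max ((Qreq - Q + PI) / PI) 0 ≤
      max ((Qreq - ρ * Q + PS) / ((1 - ρ) * Q + PS)) 0 :=
    max_le_max (h2.trans h1) le_rfl
  refine ⟨h1', h2', ?_⟩
  -- α's are ≤ 1
  have hα1 : max ((Qreq - ρ * Q + PS) / ((1 - ρ) * Q + PS)) 0 ≤ 1 := by
    refine max_le ?_ zero_le_one
    rw [div_le_one hD]; nlinarith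
  have hα2 : max ((Qreq - Q + PI) / PI) 0 ≤ 1 := by
    refine max_le ?_ zero_le_one
    rw [div_le_one hPI]; linarith
  have hlog1 : 0 ≤ Real.logb 2 M₁ := Real.logb_nonneg one_lt_two hM₁
  have hlog : Real.logb 2 M₁ ≤ Real.logb 2 M₂ :=
    by gcongr <;> first | norm_num | linarith
  have := mul_le_mul (by linarith : 1 - max ((Qreq - ρ * Q + PS) / ((1 - ρ) * Q + PS)) 0
      ≤ 1 - max ((Qreq - Q + PI) / PI) 0) hlog hlog1 (by linarith)
  linarith
end
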